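/- Let χ̃ : [0,∞)ⁿ → ℝ be smooth and for z ∈ ℂⁿ set r = (|z_1|²,…,|z_n|²) and H(z)_{jk} = (∂χ̃/∂r_j)(r) δ_{jk} + z̄_j z_k (∂²χ̃/∂r_j∂r_k)(r). Assume H(z) is positive definite (in particular invertible) for every z ∈ ℂⁿ. Let ψ(z) = ψ̃(|z_1|²,…,|z_n|²) be a smooth real-valued multi-radial function, and suppose that for each j ∈ {1,…,n} the function z ↦ Σ_{k=1}^n (H(z)^{-T})_{jk} ∂ψ/∂z̄_k is holomorphic on ℂⁿ, where H^{-T} denotes the transpose of the inverse of H. Then there exist real constants C_0, C_1, …, C_n such that, for every z and every j, Σ_k (H(z)^{-T})_{jk} ∂ψ/∂z̄_k = C_j z_j, and ψ̃(r) = C_0 + Σ_{j=1}^n C_j r_j (∂χ̃/∂r_j)(r). -/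

import Mathlib

open Complex MeasureTheory Finset
open scoped ComplexOrder

noncomputable section

/-- The Wirtinger derivative `∂f/∂z̄ₖ` of a (real-differentiable) function
`f : ℂⁿ → ℂ`, namely `½(∂f/∂xₖ + i ∂f/∂yₖ)`. -/
def wirtZBar {n : ℕ} (f : (Fin n → ℂ) → ℂ) (k : Fin n) (z : Fin n → ℂ) : ℂ :=
  (1 / 2 : ℂ) *
    (fderiv ℝ f z (Pi.single k 1) + Complex.I * fderiv ℝ f z (Pi.single k Complex.I))

/-- The Wirtinger derivative `∂ψ/∂z̄ₖ` of a real-valued function. -/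
def wirtZBarR {n : ℕ} (ψ : (Fin n → ℂ) → ℝ) (k : Fin n) (z : Fin n → ℂ) : ℂ :=
  wirtZBar (fun w => (ψ w : ℂ)) k z

/-- Partial derivative `∂f/∂rⱼ` of a function `f : ℝⁿ → ℝ`. -/
def pderiv' {n : ℕ} (f : (Fin n → ℝ) → ℝ) (j : Fin n) (r : Fin n → ℝ) : ℝ :=
  fderiv ℝ f r (Pi.single j 1)

/-- The radii `r = (|z₁|², …, |zₙ|²)`. -/
def rad {n : ℕ} (z : Fin n → ℂ) : Fin n → ℝ := fun i => Complex.normSq (z i)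

/-- The Kähler metric `H(z)ⱼₖ = (∂χ̃/∂rⱼ) δⱼₖ + z̄ⱼ zₖ ∂²χ̃/∂rⱼ∂rₖ` induced by a
multi-radial potential `χ̃`. -/
def radialMetric {n : ℕ} (χ : (Fin n → ℝ) → ℝ) (z : Fin n → ℂ) :
    Matrix (Fin n) (Fin n) ℂ := fun j k =>
  ((pderiv' χ j (rad z) : ℝ) : ℂ) * (if j = k then 1 else 0) +
    (starRingEnd ℂ) (z j) * z k * ((pderiv' (pderiv' χ j) k (rad z) : ℝ) : ℂ)


/-!
The torus `Tⁿ` acts on `ℂⁿ` by `(t · z)ⱼ = tⱼ zⱼ` and preserves `rad`, hence `∂̄ψ(t · z) = t · ∂̄ψ(z)`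
and `H(t · z) = D̄ H(z) D` with the unitary `D = diag t`. So each component of the gradient field
satisfies `gⱼ(t · z) = tⱼ gⱼ(z)`; being holomorphic, it agrees with `cⱼ zⱼ` (`c = g(1)`) on the torus,
hence everywhere. Writing out `Hᵀ (c ⊙ z) = ∂̄ψ` gives, wherever `zₖ ≠ 0`,
`∂ψ̃/∂rₖ = cₖ ∂χ̃/∂rₖ + Σⱼ cⱼ rⱼ ∂²χ̃/∂rⱼ∂rₖ = ∂/∂rₖ (Σⱼ cⱼ rⱼ ∂χ̃/∂rⱼ)`. At `z = (1, …, 1)` this is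
a linear system with the real invertible matrix `H(1)`, so `c` is real. Finally
`ψ̃ - Σⱼ cⱼ rⱼ ∂χ̃/∂rⱼ` has zero derivative along every ray of the orthant: the coordinates with
`rₖ = 0` do not contribute, and the others are positive in the interior of the ray.
-/

open scoped Matrix

theorem Differentiable.eq_of_eqOn_sphere {f g : ℂ → ℂ} (hf : Differentiable ℂ f)
    (hg : Differentiable ℂ g) (h : Set.EqOn f g (Metric.sphere 0 1)) : f = g := by
  have hball : Set.EqOn f g (Metric.ball 0 1) :=
    Complex.eqOn_of_eqOn_frontier Metric.isBounded_ball hf.diffContOnCl hg.diffContOnCl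
      (by rwa [frontier_ball 0 one_ne_zero])
  exact AnalyticOnNhd.eq_of_eventuallyEq (analyticOnNhd_univ_iff_differentiable.2 hf)
    (analyticOnNhd_univ_iff_differentiable.2 hg)
    (Filter.eventuallyEq_of_mem (Metric.ball_mem_nhds 0 one_pos) hball)

section Torus

variable {ι : Type*} [Fintype ι] [DecidableEq ι]

theorem Differentiable.eq_of_eqOn_torus {f g : (ι → ℂ) → ℂ}
    (hf : Differentiable ℂ f) (hg : Differentiable ℂ g)
    (h : ∀ t : ι → ℂ, (∀ i, ‖t i‖ = 1) → f t = g t) : f = g := by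
  suffices H : ∀ s : Finset ι, ∀ t : ι → ℂ, (∀ i ∉ s, ‖t i‖ = 1) → f t = g t from
    funext fun t => H univ t (by simp)
  intro s
  induction s using Finset.induction_on with
  | empty => simpa using h
  | insert i s _ ih =>
    intro t ht
    have hline : Differentiable ℂ (Function.update t i) := fun w =>
      (hasFDerivAt_update t w).differentiableAt
    have := (hf.comp hline).eq_of_eqOn_sphere (hg.comp hline) fun w hw => ih _ fun j hj => by
      rcases eq_or_ne j i with rfl | hji
      · simpa using hw
      · simpa [hji] using ht j (by simp [hji, hj])
    simpa using congrFun this (t i)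

theorem Differentiable.eq_mul_apply_of_map_mul {f : (ι → ℂ) → ℂ} (hf : Differentiable ℂ f)
    (j : ι) (h : ∀ t z : ι → ℂ, (∀ i, ‖t i‖ = 1) → f (t * z) = t j * f z) (z : ι → ℂ) :
    f z = f 1 * z j := by
  have := hf.eq_of_eqOn_torus (g := fun z => f 1 * z j)
    ((differentiable_const _).mul (differentiable_apply j))
    fun t ht => by simpa [mul_comm] using h t 1 ht
  exact congrFun this z

theorem Matrix.inv_star_mul_mul_of_mem_unitary {R : Type*} [CommRing R] [StarRing R]
    {A U : Matrix ι ι R} (hU : U ∈ unitary (Matrix ι ι R)) :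
    (star U * A * U)⁻¹ = star U * A⁻¹ * U := by
  rw [Matrix.mul_inv_rev, Matrix.mul_inv_rev,
    Matrix.inv_eq_left_inv (Unitary.star_mul_self_of_mem hU),
    Matrix.inv_eq_left_inv (Unitary.mul_star_self_of_mem hU), Matrix.mul_assoc]

theorem Matrix.diagonal_mem_unitary {t : ι → ℂ} (ht : ∀ i, ‖t i‖ = 1) :
    Matrix.diagonal t ∈ unitary (Matrix ι ι ℂ) := by
  have h1 : star t * t = 1 := funext fun i => by simp [Complex.conj_mul', ht i]
  have h2 : t * star t = 1 := by rw [mul_comm, h1]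
  simp only [Unitary.mem_iff, Matrix.star_eq_conjTranspose, Matrix.diagonal_conjTranspose,
    Matrix.diagonal_mul_diagonal, ← Pi.mul_apply, h1, h2, Pi.one_def, Matrix.diagonal_one,
    and_self]

end Torus

section PartialDerivatives

variable {n : ℕ}

theorem fderiv_single_eq_mul_pderiv' (f : (Fin n → ℝ) → ℝ) (x : Fin n → ℝ) (k : Fin n)
    (a : ℝ) : fderiv ℝ f x (Pi.single k a) = a * pderiv' f k x := by
  rw [pderiv', ← smul_eq_mul, ← map_smul, ← Pi.single_smul', smul_eq_mul, mul_one]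

theorem fderiv_apply_eq_sum_pderiv' (f : (Fin n → ℝ) → ℝ) (x v : Fin n → ℝ) :
    fderiv ℝ f x v = ∑ k, v k * pderiv' f k x := by
  conv_lhs => rw [← Finset.univ_sum_single v]
  simp only [map_sum, fderiv_single_eq_mul_pderiv']

theorem ContDiff.differentiable_pderiv' {f : (Fin n → ℝ) → ℝ} (hf : ContDiff ℝ 2 f)
    (j : Fin n) : Differentiable ℝ (pderiv' f j) :=
  ((hf.fderiv_right (m := 1) (by norm_num)).clm_apply contDiff_const).differentiable one_ne_zero

theorem pderiv'_sum_mul_pderiv' {χ : (Fin n → ℝ) → ℝ} {x : Fin n → ℝ}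
    (hχ : ∀ j, DifferentiableAt ℝ (pderiv' χ j) x) (C : Fin n → ℝ) (k : Fin n) :
    pderiv' (fun r => ∑ j, C j * r j * pderiv' χ j r) k x =
      C k * pderiv' χ k x + ∑ j, C j * x j * pderiv' (pderiv' χ j) k x := by
  have hd : HasFDerivAt (fun r => ∑ j, C j * r j * pderiv' χ j r)
      (∑ j, ((C j * x j) • fderiv ℝ (pderiv' χ j) x +
        pderiv' χ j x • C j • ContinuousLinearMap.proj j)) x :=
    HasFDerivAt.fun_sum fun j _ =>
      ((hasFDerivAt_apply (𝕜 := ℝ) j x).const_mul (C j)).mul (hχ j).hasFDerivAt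
  rw [pderiv', hd.fderiv]
  simp only [pderiv', sum_add_distrib, _root_.add_apply, _root_.sum_apply, _root_.smul_apply,
    smul_eq_mul, ContinuousLinearMap.proj_apply, Pi.single_apply, mul_ite, mul_one, mul_zero,
    sum_ite_eq', mem_univ, if_true]
  ring

theorem eq_apply_zero_of_pderiv'_eq_zero {F : (Fin n → ℝ) → ℝ} (hF : Differentiable ℝ F)
    (h : ∀ x : Fin n → ℝ, (∀ i, 0 ≤ x i) → ∀ k, 0 < x k → pderiv' F k x = 0)
    {r : Fin n → ℝ} (hr : ∀ i, 0 ≤ r i) : F r = F 0 := by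
  have hray : ∀ s : ℝ, HasDerivAt (fun s : ℝ => F (s • r)) (fderiv ℝ F (s • r) r) s := by
    intro s
    have hline : HasDerivAt (fun s : ℝ => s • r) r s := by
      simpa using (hasDerivAt_id s).smul_const r
    exact (hF _).hasFDerivAt.comp_hasDerivAt s hline
  obtain ⟨s, hs, hslope⟩ := exists_hasDerivAt_eq_slope _ _ zero_lt_one
    (continuous_iff_continuousAt.2 fun s => (hray s).continuousAt).continuousOn
    fun s _ => hray s
  have hzero : fderiv ℝ F (s • r) r = 0 := by
    rw [fderiv_apply_eq_sum_pderiv']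
    refine Finset.sum_eq_zero fun k _ => ?_
    rcases (hr k).eq_or_lt with hk | hk
    · rw [← hk, zero_mul]
    · rw [h (s • r) (fun i => mul_nonneg hs.1.le (hr i)) k (mul_pos hs.1 hk), mul_zero]
  rw [hzero, one_smul, zero_smul, sub_zero, div_one] at hslope
  linarith

theorem eq_add_sum_mul_pderiv' {χ ψt : (Fin n → ℝ) → ℝ} (hψt : Differentiable ℝ ψt)
    (hχ : ∀ j, Differentiable ℝ (pderiv' χ j)) (C : Fin n → ℝ)
    (h : ∀ x : Fin n → ℝ, (∀ i, 0 ≤ x i) → ∀ k, 0 < x k →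
      pderiv' ψt k x = C k * pderiv' χ k x + ∑ j, C j * x j * pderiv' (pderiv' χ j) k x)
    {r : Fin n → ℝ} (hr : ∀ i, 0 ≤ r i) :
    ψt r = ψt 0 + ∑ j, C j * r j * pderiv' χ j r := by
  have hF := eq_apply_zero_of_pderiv'_eq_zero
    (F := fun r => ψt r - ∑ j, C j * r j * pderiv' χ j r) (by fun_prop) (fun x hx k hk => by
      rw [pderiv', fderiv_fun_sub (hψt x) (by fun_prop), sub_apply, ← pderiv', ← pderiv',
        pderiv'_sum_mul_pderiv' (fun j => hχ j x), sub_eq_zero, h x hx k hk]) hr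
  simp only [Pi.zero_apply, mul_zero, zero_mul, sum_const_zero, sub_zero] at hF
  linarith

end PartialDerivatives

section MultiRadial

variable {n : ℕ}

theorem rad_mul {t : Fin n → ℂ} (ht : ∀ i, ‖t i‖ = 1) (z : Fin n → ℂ) : rad (t * z) = rad z := by
  ext i
  simp [rad, Complex.normSq_eq_norm_sq, ht i]

theorem rad_ofReal_sqrt {x : Fin n → ℝ} (hx : ∀ i, 0 ≤ x i) :
    rad (fun i => (√(x i) : ℂ)) = x :=
  funext fun i => by simp [rad, Real.mul_self_sqrt (hx i)]

theorem hasFDerivAt_rad (z : Fin n → ℂ) :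
    HasFDerivAt rad
      (ContinuousLinearMap.pi fun i => (2 • innerSL ℝ (z i)).comp (ContinuousLinearMap.proj i))
      z := by
  refine hasFDerivAt_pi.2 fun i => ?_
  simp only [rad, Complex.normSq_eq_norm_sq]
  exact (hasStrictFDerivAt_norm_sq (z i)).hasFDerivAt.comp z (hasFDerivAt_apply (𝕜 := ℝ) i z)

theorem wirtZBarR_comp_rad {ψt : (Fin n → ℝ) → ℝ} {z : Fin n → ℂ}
    (hψt : DifferentiableAt ℝ ψt (rad z)) (k : Fin n) :
    wirtZBarR (fun w => ψt (rad w)) k z = z k * pderiv' ψt k (rad z) := by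
  have hd : HasFDerivAt (fun w => (ψt (rad w) : ℂ)) _ z :=
    Complex.ofRealCLM.hasFDerivAt.comp z (hψt.hasFDerivAt.comp z (hasFDerivAt_rad z))
  have hdir : ∀ v : ℂ, fderiv ℝ (fun w => (ψt (rad w) : ℂ)) z (Pi.single k v) =
      2 * inner ℝ (z k) v * pderiv' ψt k (rad z) := by
    intro v
    have hrad : (ContinuousLinearMap.pi fun i => (2 • innerSL ℝ (z i)).comp
        (ContinuousLinearMap.proj i)) (Pi.single k v) = Pi.single k (2 * inner ℝ (z k) v) := by
      ext i
      rcases eq_or_ne i k with rfl | hik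
      · simp [-Complex.inner, two_nsmul, two_mul]
      · simp [hik]
    rw [hd.fderiv, ContinuousLinearMap.comp_apply, ContinuousLinearMap.comp_apply, hrad,
      fderiv_single_eq_mul_pderiv', Complex.ofRealCLM_apply]
    push_cast
    ring
  rw [wirtZBarR, wirtZBar, hdir, hdir]
  have h1 : inner ℝ (z k) 1 = (z k).re := by simp [Complex.inner]
  have hI : inner ℝ (z k) I = (z k).im := by simp [Complex.inner]
  rw [h1, hI]
  conv_rhs => rw [← Complex.re_add_im (z k)]
  ring

theorem radialMetric_mul (χ : (Fin n → ℝ) → ℝ) {t : Fin n → ℂ} (ht : ∀ i, ‖t i‖ = 1)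
    (z : Fin n → ℂ) :
    radialMetric χ (t * z) =
      star (Matrix.diagonal t) * radialMetric χ z * Matrix.diagonal t := by
  ext j k
  simp only [radialMetric, rad_mul ht, Matrix.star_eq_conjTranspose,
    Matrix.diagonal_conjTranspose, Matrix.mul_diagonal, Matrix.diagonal_mul, Pi.mul_apply,
    Pi.star_apply, map_mul, RCLike.star_def]
  split_ifs with hjk
  · subst hjk
    have := Complex.conj_mul' (t j)
    simp only [ht j, ofReal_one, one_pow] at this
    linear_combination (-(pderiv' χ j (rad z) : ℂ)) * this
  · ring

theorem vecMul_radialMetric (χ : (Fin n → ℝ) → ℝ) (c z : Fin n → ℂ) (k : Fin n) :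
    ((c * z) ᵥ* radialMetric χ z) k = z k * (c k * pderiv' χ k (rad z) +
      ∑ j, c j * rad z j * pderiv' (pderiv' χ j) k (rad z)) := by
  simp only [Matrix.vecMul, dotProduct, radialMetric, Pi.mul_apply, mul_add,
    Finset.sum_add_distrib, mul_ite, mul_one, mul_zero, Finset.sum_ite_eq', Finset.mem_univ,
    if_true, Finset.mul_sum]
  congr 1
  · ring
  · refine Finset.sum_congr rfl fun j _ => ?_
    simp only [rad]
    linear_combination c j * z k * (pderiv' (pderiv' χ j) k (rad z) : ℂ) * Complex.mul_conj (z j)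

def gradientField (χ : (Fin n → ℝ) → ℝ) (ψ : (Fin n → ℂ) → ℝ) (z : Fin n → ℂ) : Fin n → ℂ :=
  ((radialMetric χ z)⁻¹)ᵀ *ᵥ fun k => wirtZBarR ψ k z

theorem gradientField_mul (χ : (Fin n → ℝ) → ℝ) {ψt : (Fin n → ℝ) → ℝ}
    (hψt : Differentiable ℝ ψt) {t : Fin n → ℂ} (ht : ∀ i, ‖t i‖ = 1) (z : Fin n → ℂ) :
    gradientField χ (fun w => ψt (rad w)) (t * z) =
      t * gradientField χ (fun w => ψt (rad w)) z := by
  set w : Fin n → ℂ := fun k => z k * pderiv' ψt k (rad z)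
  have hw : (t * w) ᵥ* star (Matrix.diagonal t) = w := by
    ext k
    have := Complex.conj_mul' (t k)
    simp only [ht k, Complex.ofReal_one, one_pow] at this
    rw [Matrix.star_eq_conjTranspose, Matrix.diagonal_conjTranspose, Matrix.vecMul_diagonal]
    simp only [Pi.mul_apply, Pi.star_apply, RCLike.star_def]
    linear_combination w k * this
  ext j
  simp only [gradientField, Matrix.mulVec_transpose, wirtZBarR_comp_rad (hψt _), rad_mul ht,
    radialMetric_mul χ ht, Matrix.inv_star_mul_mul_of_mem_unitary (Matrix.diagonal_mem_unitary ht),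
    ← Matrix.vecMul_vecMul]
  rw [show (fun k => (t * z) k * (pderiv' ψt k (rad z) : ℂ)) = t * w from
    funext fun k => mul_assoc _ _ _, hw, Matrix.vecMul_diagonal, mul_comm]
  rfl

theorem vecMul_radialMetric_gradientField (χ : (Fin n → ℝ) → ℝ) (ψ : (Fin n → ℂ) → ℝ)
    {z : Fin n → ℂ} (hz : IsUnit (radialMetric χ z).det) :
    gradientField χ ψ z ᵥ* radialMetric χ z = fun k => wirtZBarR ψ k z := by
  rw [gradientField, Matrix.mulVec_transpose, Matrix.vecMul_vecMul, Matrix.nonsing_inv_mul _ hz,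
    Matrix.vecMul_one]

theorem pderiv'_eq_of_gradientField_eq_mul {χ ψt : (Fin n → ℝ) → ℝ} (hψt : Differentiable ℝ ψt)
    {c z : Fin n → ℂ} (hz : IsUnit (radialMetric χ z).det)
    (hc : gradientField χ (fun w => ψt (rad w)) z = c * z) {k : Fin n} (hk : z k ≠ 0) :
    (pderiv' ψt k (rad z) : ℂ) =
      c k * pderiv' χ k (rad z) + ∑ j, c j * rad z j * pderiv' (pderiv' χ j) k (rad z) := by
  have := congrFun (vecMul_radialMetric_gradientField χ (fun w => ψt (rad w)) hz) k
  rw [hc, vecMul_radialMetric, wirtZBarR_comp_rad (hψt _)] at this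
  exact (mul_left_cancel₀ hk this).symm

theorem ofReal_re_eq_of_radialMetric_one {χ : (Fin n → ℝ) → ℝ}
    (h1 : IsUnit (radialMetric χ 1).det) {c : Fin n → ℂ}
    (hc : ∀ k, (c k * pderiv' χ k (rad 1) +
      ∑ j, c j * rad 1 j * pderiv' (pderiv' χ j) k (rad 1)).im = 0) (j : Fin n) :
    ((c j).re : ℂ) = c j := by
  set v : Fin n → ℂ := fun j => ((c j).im : ℂ)
  have hv : v ᵥ* radialMetric χ 1 = 0 ᵥ* radialMetric χ 1 := by
    ext k
    have hk := hc k
    simp only [add_im, mul_im, ofReal_im, mul_zero, ofReal_re, zero_add, im_sum, mul_re,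
      sub_zero] at hk
    rw [← mul_one v, vecMul_radialMetric, Matrix.zero_vecMul]
    simp only [Pi.one_apply, one_mul, Pi.zero_apply, v]
    exact_mod_cast hk
  have := congrFun (Matrix.vecMul_injective_iff_isUnit.2
    ((Matrix.isUnit_iff_isUnit_det _).2 h1) hv) j
  apply Complex.ext <;> simp_all [v]

end MultiRadial

theorem stmt6 (n : ℕ) (χ : (Fin n → ℝ) → ℝ) (hχ : ContDiff ℝ (⊤ : ℕ∞) χ)
    (hpos : ∀ z : Fin n → ℂ, (radialMetric χ z).PosDef)
    (ψt : (Fin n → ℝ) → ℝ) (hψt : ContDiff ℝ (⊤ : ℕ∞) ψt)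
    (ψ : (Fin n → ℂ) → ℝ) (hψ : ∀ z, ψ z = ψt (rad z))
    (hhol : ∀ j : Fin n,
      Differentiable ℂ
        (fun z => ∑ k, ((radialMetric χ z)⁻¹).transpose j k * wirtZBarR ψ k z)) :
    ∃ C₀ : ℝ, ∃ C : Fin n → ℝ,
      (∀ z : Fin n → ℂ, ∀ j : Fin n,
        (∑ k, ((radialMetric χ z)⁻¹).transpose j k * wirtZBarR ψ k z) =
          ((C j : ℝ) : ℂ) * z j) ∧
      (∀ r : Fin n → ℝ, (∀ i, 0 ≤ r i) →
        ψt r = C₀ + ∑ j, C j * r j * pderiv' χ j r) := by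
  obtain rfl : ψ = fun z => ψt (rad z) := funext hψ
  have hψd : Differentiable ℝ ψt := hψt.differentiable (by simp)
  have hχd : ∀ j, Differentiable ℝ (pderiv' χ j) :=
    (hχ.of_le (WithTop.coe_le_coe.2 le_top)).differentiable_pderiv'
  have hdet : ∀ z, IsUnit (radialMetric χ z).det := fun z =>
    (Matrix.isUnit_iff_isUnit_det _).1 (hpos z).isUnit
  set c := gradientField χ (fun z => ψt (rad z)) 1
  have hlin : ∀ z, gradientField χ (fun z => ψt (rad z)) z = c * z := fun z => funext fun j =>
    (hhol j).eq_mul_apply_of_map_mul j (fun t w ht => congrFun (gradientField_mul χ hψd ht w) j) z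
  have hkey := fun z k => pderiv'_eq_of_gradientField_eq_mul hψd (hdet z) (hlin z) (k := k)
  obtain ⟨C, hC⟩ : ∃ C : Fin n → ℝ, c = fun j => (C j : ℂ) :=
    ⟨_, funext (ofReal_re_eq_of_radialMetric_one (hdet 1) fun k => by
      rw [← hkey 1 k one_ne_zero, Complex.ofReal_im]) |>.symm⟩
  simp only [hC] at hlin hkey
  refine ⟨ψt 0, C, fun z j => congrFun (hlin z) j,
    fun r hr => eq_add_sum_mul_pderiv' hψd hχd C (fun x hx k hk => ?_) hr⟩
  have := hkey (fun i => (√(x i) : ℂ)) k (by simp [(Real.sqrt_pos.2 hk).ne'])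
  rw [rad_ofReal_sqrt hx] at this
  exact_mod_cast this
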